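/- Let k > d ≥ 2 and let x_1 < x_2 < ... < x_k be real numbers. Suppose Q is a real polynomial of degree d that is extremal for (d, {x_1,...,x_k}). Then Q(x_1) = (−1)^d and Q(x_k) = 1. -/

import Mathlib

/-!
If `p` is monic of degree `d` and `Q · p ≤ 0` at every point where `|Q| = 1`, then `Q + ε p` is
still bounded by `1` on the points for small `ε > 0` and has a larger leading coefficient. This
forces `lc Q > 0` and, scanning the points from the right, `d + 1` points `w₀ > ⋯ > w_d` with
`Q (w_j) = (-1) ^ j`: if the greedy scan stops early, a product of linear factors through the
points found so far is such a `p`. Lagrange interpolation at the `w_j` shows `Q > 1` to the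
right of `w₀`, so `w₀` is the largest point. The value at the smallest point follows by applying
this to `t ↦ (-1) ^ d Q (-t)`.
-/

/-- `Q` is extremal for `(d, {x 0, ..., x (k-1)})`: it has degree `d`, is bounded in absolute
value by `1` on the points `x i`, and its leading coefficient is maximal among all degree `d`
polynomials bounded in absolute value by `1` on the points `x i`. -/
def IsExtremal (d : ℕ) {k : ℕ} (x : Fin k → ℝ) (Q : Polynomial ℝ) : Prop :=
  Q.natDegree = d ∧ (∀ i : Fin k, |Q.eval (x i)| ≤ 1) ∧
    ∀ R : Polynomial ℝ, R.natDegree = d → (∀ i : Fin k, |R.eval (x i)| ≤ 1) →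
      R.leadingCoeff ≤ Q.leadingCoeff

open Polynomial Finset Filter Topology

lemma eventually_add_mul_le_one {q p : ℝ} (hq : q ≤ 1) (hqp : q = 1 → p ≤ 0) :
    ∀ᶠ ε in 𝓝[>] (0 : ℝ), q + ε * p ≤ 1 := by
  rcases hq.lt_or_eq with hq | rfl
  · have : Tendsto (fun ε : ℝ => q + ε * p) (𝓝 0) (𝓝 q) :=
      (continuous_const.add (continuous_id.mul continuous_const)).tendsto' 0 q (by simp)
    exact (this.eventually (eventually_le_nhds hq)).filter_mono nhdsWithin_le_nhds
  · filter_upwards [self_mem_nhdsWithin] with ε hε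
    nlinarith [hqp rfl, Set.mem_Ioi.1 hε]

lemma eventually_abs_add_mul_le_one {q p : ℝ} (hq : |q| ≤ 1) (hqp : |q| = 1 → q * p ≤ 0) :
    ∀ᶠ ε in 𝓝[>] (0 : ℝ), |q + ε * p| ≤ 1 := by
  rw [abs_le] at hq
  have hupper := eventually_add_mul_le_one hq.2 fun h => by
    simpa [h] using hqp (by rw [h, abs_one])
  have hlower := eventually_add_mul_le_one (q := -q) (p := -p) (by linarith) fun h => by
    rw [neg_eq_iff_eq_neg] at h
    simpa [h] using hqp (by rw [h, abs_neg, abs_one])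
  filter_upwards [hupper, hlower] with ε h₁ h₂
  exact abs_le.2 ⟨by linarith, h₁⟩

lemma exists_pos_forall_abs_eval_add_C_mul_le_one {ι : Type*} [Finite ι] (x : ι → ℝ)
    {P p : ℝ[X]} (hP : ∀ i, |P.eval (x i)| ≤ 1)
    (hPp : ∀ i, |P.eval (x i)| = 1 → P.eval (x i) * p.eval (x i) ≤ 0) :
    ∃ ε > 0, ∀ i, |(P + C ε * p).eval (x i)| ≤ 1 := by
  obtain ⟨ε, hε, hεpos⟩ := ((eventually_all.2 fun i =>
    eventually_abs_add_mul_le_one (hP i) (hPp i)).and self_mem_nhdsWithin).exists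
  exact ⟨ε, hεpos, fun i => by simpa using hε i⟩

namespace IsExtremal

variable {d k : ℕ} {x : Fin k → ℝ} {Q : ℝ[X]}

lemma leadingCoeff_pos (hQ : IsExtremal d x Q) : 0 < Q.leadingCoeff := by
  obtain ⟨ε, hε, hbound⟩ := exists_pos_forall_abs_eval_add_C_mul_le_one x (P := 0) (p := X ^ d)
    (by simp) (by simp)
  have := hQ.2.2 (C ε * X ^ d) (natDegree_C_mul_X_pow d ε hε.ne') (by simpa using hbound)
  rw [leadingCoeff_C_mul_X_pow] at this
  linarith

lemma exists_abs_eval_eq_one_mul_eval_pos (hQ : IsExtremal d x Q) {p : ℝ[X]} (hp : p.Monic)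
    (hpd : p.natDegree = d) :
    ∃ i, |Q.eval (x i)| = 1 ∧ 0 < Q.eval (x i) * p.eval (x i) := by
  by_contra! h
  obtain ⟨ε, hε, hbound⟩ := exists_pos_forall_abs_eval_add_C_mul_le_one x hQ.2.1 h
  have hQ0 := hQ.leadingCoeff_pos
  have hεp : (C ε * p).leadingCoeff = ε := by rw [leadingCoeff_mul, leadingCoeff_C, hp, mul_one]
  have hp0 : C ε * p ≠ 0 := by rw [← leadingCoeff_ne_zero, hεp]; exact hε.ne'
  have hdeg : Q.degree = (C ε * p).degree := by
    rw [degree_eq_natDegree (leadingCoeff_ne_zero.1 hQ0.ne'), degree_eq_natDegree hp0,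
      natDegree_C_mul hε.ne', hQ.1, hpd]
  have hlc : Q.leadingCoeff + (C ε * p).leadingCoeff ≠ 0 := by rw [hεp]; positivity
  have hnat : (Q + C ε * p).natDegree = d := by
    rw [← hQ.1]
    exact natDegree_eq_of_degree_eq
      (by rw [degree_add_eq_of_leadingCoeff_add_ne_zero hlc, hdeg, max_self])
  have := hQ.2.2 _ hnat hbound
  rw [leadingCoeff_add_of_degree_eq hdeg hlc, hεp] at this
  linarith

end IsExtremal

lemma neg_one_pow_mul_prod_erase_pos {n : ℕ} {f : Fin n → ℝ} (i : Fin n)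
    (hlt : ∀ j < i, f j < 0) (hgt : ∀ j, i < j → 0 < f j) :
    0 < (-1) ^ (i : ℕ) * ∏ j ∈ univ.erase i, f j := by
  have hIio : (univ.erase i).filter (· < i) = Iio i := by
    ext j; simpa using fun h => h.ne
  rw [← prod_filter_mul_prod_filter_not (univ.erase i) (· < i), hIio]
  have key : (-1) ^ (i : ℕ) * ((∏ j ∈ Iio i, f j) * ∏ j ∈ (univ.erase i).filter (¬ · < i), f j)
      = (∏ j ∈ Iio i, -f j) * ∏ j ∈ (univ.erase i).filter (¬ · < i), f j := by
    rw [prod_neg, Fin.card_Iio]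
    ring
  rw [key]
  refine mul_pos (prod_pos fun j hj => neg_pos.2 (hlt j (mem_Iio.1 hj))) (prod_pos fun j hj => ?_)
  simp only [mem_filter, mem_erase, not_lt] at hj
  exact hgt j (lt_of_le_of_ne hj.2 (Ne.symm hj.1.1))

theorem one_lt_eval_of_alternation {n : ℕ} (hn : n ≠ 0) {w : Fin (n + 1) → ℝ}
    (hw : StrictAnti w) {Q : ℝ[X]} (hQd : Q.natDegree ≤ n)
    (hQw : ∀ j, Q.eval (w j) = (-1) ^ (j : ℕ))
    {y : ℝ} (hy : w 0 < y) : 1 < Q.eval y := by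
  have hinj : Set.InjOn w (univ : Finset (Fin (n + 1))) := hw.injective.injOn
  have hwy : ∀ j, w j < y := fun j => (hw.antitone (Fin.zero_le j)).trans_lt hy
  have hbasis : ∀ i : Fin (n + 1), 0 < (-1) ^ (i : ℕ) * (Lagrange.basis univ w i).eval y := by
    intro i
    have hweight : 0 < (-1) ^ (i : ℕ) * Lagrange.nodalWeight univ w i :=
      neg_one_pow_mul_prod_erase_pos i (fun j hj => inv_lt_zero.2 (sub_neg.2 (hw hj)))
        fun j hj => inv_pos.2 (sub_pos.2 (hw hj))
    have hnodal : 0 < ∏ j, (y - w j) := prod_pos fun j _ => sub_pos.2 (hwy j)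
    have hinv : 0 < (y - w i)⁻¹ := inv_pos.2 (sub_pos.2 (hwy i))
    rw [Lagrange.eval_basis_not_at_node (mem_univ i) (hwy i).ne', Lagrange.eval_nodal]
    calc (0 : ℝ) < (∏ j, (y - w j)) * (((-1) ^ (i : ℕ) * Lagrange.nodalWeight univ w i) *
        (y - w i)⁻¹) := by positivity
      _ = _ := by ring
  have hQ : Q = Lagrange.interpolate univ w (fun j => (-1) ^ (j : ℕ)) :=
    Lagrange.eq_interpolate_of_eval_eq _ hinj
      (degree_le_natDegree.trans_lt (by
        rw [card_univ, Fintype.card_fin]; exact_mod_cast Nat.lt_succ_of_le hQd)) fun j _ => hQw j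
  have hsum : ∑ i, (Lagrange.basis univ w i).eval y = 1 := by
    rw [← eval_finsetSum, Lagrange.sum_basis hinj univ_nonempty, eval_one]
  -- the interpolation weights sum to `1`, and those of odd index are negative
  have hdiff : Q.eval y - ∑ i, (Lagrange.basis univ w i).eval y = ∑ i : Fin (n + 1),
      (1 - (-1) ^ (i : ℕ)) * ((-1) ^ (i : ℕ) * (Lagrange.basis univ w i).eval y) := by
    rw [hQ, Lagrange.interpolate_apply, eval_finsetSum, ← sum_sub_distrib]
    refine sum_congr rfl fun i _ => ?_
    have hsq : ((-1 : ℝ) ^ (i : ℕ)) ^ 2 = 1 := by rw [← pow_mul, pow_mul']; norm_num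
    rw [eval_mul, eval_C]
    linear_combination (Lagrange.basis univ w i).eval y * hsq
  rw [hsum] at hdiff
  have hpos : 0 < ∑ i : Fin (n + 1),
      (1 - (-1) ^ (i : ℕ)) * ((-1) ^ (i : ℕ) * (Lagrange.basis univ w i).eval y) := by
    refine sum_pos' (fun i _ => mul_nonneg ?_ (hbasis i).le) ⟨⟨1, by omega⟩, mem_univ _, ?_⟩
    · rcases neg_one_pow_eq_or ℝ (i : ℕ) with h | h <;> rw [h] <;> norm_num
    · exact mul_pos (by norm_num) (hbasis _)
  linarith

lemma exists_monic_mul_nonpos_of_nonpos (d : ℕ) {v : ℝ → ℝ} {A : Finset ℝ} (b : ℝ)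
    (hv : ∀ s ∈ A, v s ≤ 0) :
    ∃ p : ℝ[X], p.Monic ∧ p.natDegree = d ∧ (∀ s ∈ A, v s * p.eval s ≤ 0) ∧
      ∀ t, b ≤ t → 0 ≤ p.eval t := by
  obtain ⟨c, hc⟩ := (insert b A).bddBelow
  have hc' : ∀ t ∈ insert b A, 0 ≤ ((X - C c) ^ d).eval t := fun t ht => by
    simpa using pow_nonneg (sub_nonneg.2 (hc ht)) d
  refine ⟨(X - C c) ^ d, (monic_X_sub_C c).pow d, by simp, fun s hs => ?_, fun t ht => ?_⟩
  · exact mul_nonpos_of_nonpos_of_nonneg (hv s hs) (hc' s (mem_insert_of_mem hs))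
  · simpa using pow_nonneg (sub_nonneg.2 ((hc (mem_insert_self b A)).trans ht)) d

-- The nonnegativity of `p` on `[b, ∞)` is what lets the induction step put the new root `w₀`
-- to the right of all the roots found by the recursive call.
theorem exists_alternation_or_monic_mul_nonpos (d : ℕ) (v : ℝ → ℝ) (A : Finset ℝ) (b : ℝ)
    (hv : ∀ s ∈ A, |v s| = 1) (hb : ∀ s ∈ A, s ≤ b) :
    (∃ w : Fin (d + 1) → ℝ, StrictAnti w ∧ ∀ j, w j ∈ A ∧ v (w j) = (-1) ^ (j : ℕ)) ∨
    ∃ p : ℝ[X], p.Monic ∧ p.natDegree = d ∧ (∀ s ∈ A, v s * p.eval s ≤ 0) ∧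
      ∀ t, b ≤ t → 0 ≤ p.eval t := by
  have hv' : ∀ s ∈ A, v s = 1 ∨ v s = -1 := fun s hs => (abs_eq zero_le_one).1 (hv s hs)
  by_cases! hA : ∀ s ∈ A, v s ≠ 1
  · exact .inr (exists_monic_mul_nonpos_of_nonpos d b fun s hs => by
      rcases hv' s hs with h | h
      exacts [(hA s hs h).elim, h.le.trans (by norm_num)])
  obtain ⟨w₀, hw₀, hmax⟩ := (A.filter (v · = 1)).exists_max_image id (filter_nonempty_iff.2 hA)
  simp only [mem_filter, id] at hw₀ hmax
  cases d with
  | zero => exact .inl ⟨![w₀], strictAnti_vecEmpty, by simpa using hw₀⟩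
  | succ d =>
    rcases exists_alternation_or_monic_mul_nonpos d (-v) (A.filter (· < w₀)) w₀
      (fun s hs => by simpa using hv s (mem_filter.1 hs).1)
      (fun s hs => (mem_filter.1 hs).2.le) with ⟨w, hw, hwA⟩ | ⟨p, hpm, hpd, hps, hpb⟩
    · refine .inl ⟨Matrix.vecCons w₀ w, hw.vecCons (mem_filter.1 (hwA 0).1).2,
        Fin.cases (by simpa using hw₀) fun j => ?_⟩
      obtain ⟨hj, hvj⟩ := hwA j
      simp only [Matrix.cons_val_succ, Fin.val_succ, pow_succ]
      exact ⟨(mem_filter.1 hj).1, by simp only [Pi.neg_apply] at hvj; linarith⟩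
    · refine .inr ⟨(X - C w₀) * p, (monic_X_sub_C w₀).mul hpm,
        by rw [(monic_X_sub_C w₀).natDegree_mul hpm, hpd, natDegree_X_sub_C, add_comm],
        fun s hs => ?_, fun t ht => ?_⟩
      · simp only [eval_mul, eval_sub, eval_X, eval_C]
        rcases lt_or_ge s w₀ with hlt | hle
        · have := hps s (mem_filter.2 ⟨hs, hlt⟩)
          simp only [Pi.neg_apply, neg_mul, neg_nonpos] at this
          nlinarith
        · rcases hv' s hs with h | h
          · simp [le_antisymm (hmax s ⟨hs, h⟩) hle]
          · rw [h]
            nlinarith [mul_nonneg (sub_nonneg.2 hle) (hpb s hle)]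
      · simp only [eval_mul, eval_sub, eval_X, eval_C]
        have := hb w₀ hw₀.1
        exact mul_nonneg (by linarith) (hpb t (by linarith))

noncomputable def signedCompNeg (p : ℝ[X]) : ℝ[X] := C ((-1) ^ p.natDegree) * p.comp (-X)

lemma eval_signedCompNeg (p : ℝ[X]) (t : ℝ) :
    (signedCompNeg p).eval t = (-1) ^ p.natDegree * p.eval (-t) := by
  simp [signedCompNeg]

lemma abs_eval_signedCompNeg (p : ℝ[X]) (t : ℝ) :
    |(signedCompNeg p).eval t| = |p.eval (-t)| := by
  simp [eval_signedCompNeg, abs_mul]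

lemma natDegree_signedCompNeg (p : ℝ[X]) : (signedCompNeg p).natDegree = p.natDegree := by
  rw [signedCompNeg, natDegree_C_mul (by simp), natDegree_comp]
  simp

lemma leadingCoeff_signedCompNeg (p : ℝ[X]) :
    (signedCompNeg p).leadingCoeff = p.leadingCoeff := by
  rw [signedCompNeg, leadingCoeff_mul, leadingCoeff_C, leadingCoeff_comp (by simp),
    leadingCoeff_neg, leadingCoeff_X, mul_left_comm, ← mul_pow]
  norm_num

namespace IsExtremal

variable {d k : ℕ} {x : Fin k → ℝ} {Q : ℝ[X]}

lemma signedCompNeg (hQ : IsExtremal d x Q) : IsExtremal d (-x) (signedCompNeg Q) := by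
  refine ⟨by rw [natDegree_signedCompNeg, hQ.1],
    fun i => by simpa [abs_eval_signedCompNeg] using hQ.2.1 i, fun R hRd hRb => ?_⟩
  rw [← leadingCoeff_signedCompNeg R, leadingCoeff_signedCompNeg Q]
  exact hQ.2.2 _ (by rw [natDegree_signedCompNeg, hRd])
    fun i => by simpa [abs_eval_signedCompNeg] using hRb i

theorem eval_eq_one_of_forall_le (hd : d ≠ 0) (hQ : IsExtremal d x Q) {i : Fin k}
    (hi : ∀ j, x j ≤ x i) : Q.eval (x i) = 1 := by
  set A := (univ.image x).filter (fun s => |Q.eval s| = 1)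
  have hAx : ∀ s ∈ A, ∃ j, x j = s := fun s hs => by simpa using (mem_filter.1 hs).1
  rcases exists_alternation_or_monic_mul_nonpos d Q.eval A (x i)
    (fun s hs => (mem_filter.1 hs).2) (fun s hs => by obtain ⟨j, rfl⟩ := hAx s hs; exact hi j)
    with ⟨w, hw, hwA⟩ | ⟨p, hpm, hpd, hp, -⟩
  · obtain ⟨j, hj⟩ := hAx _ (hwA 0).1
    rcases (hi j).lt_or_eq with hlt | heq
    · have := one_lt_eval_of_alternation hd hw hQ.1.le (fun j => (hwA j).2) (hj ▸ hlt)
      linarith [(abs_le.1 (hQ.2.1 i)).2]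
    · simpa [← heq, hj] using (hwA 0).2
  · obtain ⟨j, hj, hpos⟩ := hQ.exists_abs_eval_eq_one_mul_eval_pos hpm hpd
    exact absurd (hp _ (mem_filter.2 ⟨mem_image_of_mem x (mem_univ j), hj⟩)) (not_le.2 hpos)

end IsExtremal

theorem stmt_10 (d k : ℕ) (hd : 2 ≤ d) (hdk : d < k) (x : Fin k → ℝ) (hx : StrictMono x)
    (Q : Polynomial ℝ) (hQ : IsExtremal d x Q) :
    Q.eval (x ⟨0, by omega⟩) = (-1 : ℝ) ^ d ∧ Q.eval (x ⟨k - 1, by omega⟩) = 1 := by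
  have hd₀ : d ≠ 0 := by omega
  refine ⟨?_, hQ.eval_eq_one_of_forall_le hd₀
    fun j => hx.monotone (Fin.le_def.2 (Nat.le_sub_one_of_lt j.isLt))⟩
  have h := hQ.signedCompNeg.eval_eq_one_of_forall_le hd₀ (i := ⟨0, by omega⟩)
    fun j => neg_le_neg (hx.monotone (Fin.le_def.2 (Nat.zero_le _)))
  rw [Pi.neg_apply, eval_signedCompNeg, neg_neg, hQ.1] at h
  calc Q.eval (x ⟨0, _⟩) = (-1) ^ d * ((-1) ^ d * Q.eval (x ⟨0, _⟩)) := by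
        rw [← mul_assoc, ← mul_pow]; norm_num
    _ = (-1) ^ d := by rw [h, mul_one]
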